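/- arXiv:1001.4169 — 6 statements merged into one kernel-verified Lean document; each statement's English description precedes it below -/
import Mathlib

section
/- For integers $q \geq 2$, $a \geq 1$, $k \geq 1$, and $1 \leq b < q^k$, the base-$q$ digit sum satisfies $s_q(aq^k - b) = s_q(a-1) + (q-1)k - s_q(b-1)$. -/
/-- `digitSum q n` is the sum of digits of `n` in base `q`. -/
def digitSum (q n : ℕ) : ℕ := (Nat.digits q n).sum

lemma ds_mul_add {q : ℕ} (hq : 2 ≤ q) (t r : ℕ) (hr : r < q) :
    digitSum q (q * t + r) = r + digitSum q t := by
  rcases Nat.eq_zero_or_pos (q * t + r) with h | h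
  · have ht : t = 0 := by
      rcases Nat.eq_zero_or_pos t with h' | h'
      · exact h'
      · nlinarith
    have hr0 : r = 0 := by omega
    simp [ht, hr0, digitSum]
  · unfold digitSum
    rw [Nat.digits_def' (by omega : 1 < q) h]
    have h1 : (q * t + r) % q = r := by
      rw [Nat.mul_add_mod]; exact Nat.mod_eq_of_lt hr
    have h2 : (q * t + r) / q = t := by
      rw [Nat.mul_add_div (by omega), Nat.div_eq_of_lt hr]; omega
    simp [h1, h2]

lemma ds_complement {q : ℕ} (hq : 2 ≤ q) (k : ℕ) :
    ∀ m, m < q ^ k → digitSum q m + digitSum q (q ^ k - 1 - m) = (q - 1) * k := by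
  induction k with
  | zero =>
    intro m hm
    have : m = 0 := by simpa using hm
    subst this; simp [digitSum]
  | succ k ih =>
    intro m hm
    have hdm : m / q < q ^ k := by
      rw [Nat.div_lt_iff_lt_mul (by omega)]
      calc m < q ^ (k+1) := hm
        _ = q ^ k * q := by ring
    have hrm : m % q < q := Nat.mod_lt _ (by omega)
    have hdvd : q * (m / q) + m % q = m := Nat.div_add_mod m q
    have hqk : 1 ≤ q ^ k := Nat.one_le_pow _ _ (by omega)
    have hqk1 : q ^ (k+1) = q * q ^ k := by ring
    have e1 : digitSum q m = m % q + digitSum q (m / q) := by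
      conv_lhs => rw [← hdvd]
      exact ds_mul_add hq _ _ hrm
    have e2 : q ^ (k+1) - 1 - m = q * (q ^ k - 1 - m / q) + (q - 1 - m % q) := by
      have h3 : (q ^ k - 1 - m / q) + (m / q) + 1 = q ^ k := by omega
      have h4 : q * ((q ^ k - 1 - m / q) + (m / q) + 1) = q * q ^ k := by rw [h3]
      rw [Nat.mul_add, Nat.mul_add, mul_one] at h4
      omega
    have e3 : digitSum q (q ^ (k+1) - 1 - m)
        = (q - 1 - m % q) + digitSum q (q ^ k - 1 - m / q) := by
      rw [e2]; exact ds_mul_add hq _ _ (by omega)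
    have hIH := ih (m / q) hdm
    rw [e1, e3]
    have hmul : (q - 1) * (k + 1) = (q - 1) * k + (q - 1) := by ring
    omega

lemma ds_split {q : ℕ} (hq : 2 ≤ q) (k n a : ℕ) (hn : n < q ^ k) :
    digitSum q (n + q ^ k * a) = digitSum q n + digitSum q a := by
  rcases Nat.eq_zero_or_pos a with rfl | ha
  · simp [digitSum]
  have hlen : (Nat.digits q n).length ≤ k := by
    rcases Nat.eq_zero_or_pos n with rfl | hn0
    · simp
    · rw [Nat.digits_len q n (by omega) (by omega)]
      have := (Nat.log_lt_iff_lt_pow (by omega : 1 < q) (by omega : n ≠ 0)).mpr hn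
      omega
  have hk : (Nat.digits q n).length + (k - (Nat.digits q n).length) = k := by omega
  have := Nat.digits_append_zeroes_append_digits (b := q) (k := k - (Nat.digits q n).length)
    (m := a) (n := n) (by omega) ha
  rw [hk] at this
  unfold digitSum
  rw [← this]
  simp

theorem stmt_1 (q a k b : ℕ) (hq : 2 ≤ q) (ha : 1 ≤ a) (hk : 1 ≤ k)
    (hb1 : 1 ≤ b) (hb2 : b < q ^ k) :
    (digitSum q (a * q ^ k - b) : ℤ) = digitSum q (a - 1) + (q - 1) * k - digitSum q (b - 1) := by
  have hqk : 1 ≤ q ^ k := Nat.one_le_pow _ _ (by omega)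
  have hsplit : a * q ^ k - b = (q ^ k - b) + q ^ k * (a - 1) := by
    have h3 : q ^ k * (a - 1) + q ^ k * 1 = q ^ k * a := by
      rw [← Nat.mul_add]; congr 1; omega
    have h4 : a * q ^ k = q ^ k * a := Nat.mul_comm _ _
    omega
  have hcb : q ^ k - b = q ^ k - 1 - (b - 1) := by omega
  have hcomp := ds_complement hq k (b - 1) (by omega)
  rw [hsplit, ds_split hq k _ _ (by omega), hcb]
  have hcast : (digitSum q (b - 1) : ℤ) + digitSum q (q ^ k - 1 - (b - 1))
      = ((q : ℤ) - 1) * k := by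
    have h1 : ((q - 1 : ℕ) : ℤ) = (q : ℤ) - 1 := by
      push_cast [Nat.cast_sub (show 1 ≤ q by omega)]; ring
    rw [← h1]
    exact_mod_cast hcomp
  push_cast
  linarith
end

section
/- For any integer $q \geq 2$ and all nonnegative integers $a, b$, we have $s_q(ab) \leq s_q(a) \cdot s_q(b)$. -/
lemma digitSum_def (q n : ℕ) (hq : 2 ≤ q) (hn : n ≠ 0) :
    digitSum q n = n % q + digitSum q (n / q) := by
  unfold digitSum
  rw [Nat.digits_def' (by omega : 1 < q) (Nat.pos_of_ne_zero hn), List.sum_cons]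

lemma digitSum_one (q : ℕ) (hq : 2 ≤ q) : digitSum q 1 = 1 := by
  rw [digitSum_def q 1 hq one_ne_zero, Nat.div_eq_of_lt (by omega),
    Nat.mod_eq_of_lt (by omega)]
  simp [digitSum]

lemma digitSum_subadd (q : ℕ) (hq : 2 ≤ q) :
    ∀ s m n, m + n ≤ s → digitSum q (m + n) ≤ digitSum q m + digitSum q n := by
  intro s
  induction s using Nat.strong_induction_on with
  | _ s ih =>
    intro m n hs
    rcases Nat.eq_zero_or_pos m with hm | hm
    · simp [hm]
    rcases Nat.eq_zero_or_pos n with hn | hn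
    · simp [hn]
    have hq0 : 0 < q := by omega
    have hmq : m / q ≤ m - 1 := by
      have := Nat.div_le_div_right (c := q) (Nat.le_refl m)
      have h2 : m / q < m := Nat.div_lt_self hm (by omega)
      omega
    have hnq : n / q ≤ n - 1 := by
      have h2 : n / q < n := Nat.div_lt_self hn (by omega)
      omega
    have hs' : 0 < s := by omega
    rw [digitSum_def q (m + n) hq (by omega),
        digitSum_def q m hq (by omega), digitSum_def q n hq (by omega)]
    have hmod : m % q < q := Nat.mod_lt _ hq0
    have hnmod : n % q < q := Nat.mod_lt _ hq0
    have keyd : (m + n) / q = m / q + n / q + if q ≤ m % q + n % q then 1 else 0 :=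
      Nat.add_div hq0
    have keym : (m + n) % q = (m % q + n % q) % q := Nat.add_mod m n q
    rcases Nat.lt_or_ge (m % q + n % q) q with hc | hc
    · -- no carry
      have hdiv : (m + n) / q = m / q + n / q := by
        rw [keyd, if_neg (by omega)]; omega
      have hmodmn : (m + n) % q = m % q + n % q := by
        rw [keym, Nat.mod_eq_of_lt hc]
      rw [hdiv, hmodmn]
      have := ih (s - 1) (by omega) (m / q) (n / q) (by omega)
      omega
    · -- carry
      have hdiv : (m + n) / q = m / q + n / q + 1 := by
        rw [keyd, if_pos hc]
      have hmodmn : (m + n) % q = m % q + n % q - q := by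
        rw [keym, Nat.mod_eq_sub_mod hc, Nat.mod_eq_of_lt (by omega)]
      rw [hdiv, hmodmn]
      have h1 := ih (s - 1) (by omega) (m / q + n / q) 1 (by omega)
      have h2 := ih (s - 1) (by omega) (m / q) (n / q) (by omega)
      rw [digitSum_one q hq] at h1
      omega

lemma digitSum_add (q : ℕ) (hq : 2 ≤ q) (m n : ℕ) :
    digitSum q (m + n) ≤ digitSum q m + digitSum q n :=
  digitSum_subadd q hq (m + n) m n le_rfl

lemma digitSum_nsmul (q : ℕ) (hq : 2 ≤ q) (c n : ℕ) :
    digitSum q (c * n) ≤ c * digitSum q n := by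
  induction c with
  | zero => simp [digitSum]
  | succ c ih =>
    have : (c + 1) * n = c * n + n := by ring
    rw [this]
    calc digitSum q (c * n + n) ≤ digitSum q (c * n) + digitSum q n :=
          digitSum_add q hq _ _
      _ ≤ c * digitSum q n + digitSum q n := by omega
      _ = (c + 1) * digitSum q n := by ring

lemma digitSum_base_mul (q : ℕ) (hq : 2 ≤ q) (n : ℕ) :
    digitSum q (q * n) = digitSum q n := by
  rcases Nat.eq_zero_or_pos n with hn | hn
  · simp [hn]
  rw [digitSum_def q (q * n) hq (by positivity), Nat.mul_mod_right,
    Nat.mul_div_cancel_left _ (by omega : 0 < q), Nat.zero_add]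

theorem stmt_3 (q a b : ℕ) (hq : 2 ≤ q) :
    digitSum q (a * b) ≤ digitSum q a * digitSum q b := by
  induction a using Nat.strong_induction_on with
  | _ a ih =>
    rcases Nat.eq_zero_or_pos a with ha | ha
    · simp [ha, digitSum]
    have hdec : a / q < a := Nat.div_lt_self ha (by omega)
    have hsplit : a * b = (a % q) * b + q * (a / q * b) := by
      have := Nat.div_add_mod a q
      calc a * b = (a % q + q * (a / q)) * b := by rw [Nat.mod_add_div]
        _ = (a % q) * b + q * (a / q * b) := by ring
    rw [hsplit]
    calc digitSum q ((a % q) * b + q * (a / q * b))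
        ≤ digitSum q ((a % q) * b) + digitSum q (q * (a / q * b)) :=
          digitSum_add q hq _ _
      _ = digitSum q ((a % q) * b) + digitSum q (a / q * b) := by
          rw [digitSum_base_mul q hq]
      _ ≤ (a % q) * digitSum q b + digitSum q (a / q) * digitSum q b := by
          have h1 := digitSum_nsmul q hq (a % q) b
          have h2 := ih (a / q) hdec
          omega
      _ = (a % q + digitSum q (a / q)) * digitSum q b := by ring
      _ = digitSum q a * digitSum q b := by rw [← digitSum_def q a hq (by omega)]
end

section
/- Let $q \geq 2$ and let $p(x) \in \mathbb{Z}[x]$ be a polynomial of degree $h \geq 2$ with positive leading coefficient and at least one negative coefficient. Then there exist a constant $c_2 > 0$ and an integer $n_0$, depending only on $p$ and $q$, such that for all integers $n \geq n_0$, $s_q(p(n))/s_q(n) \leq c_2 \log_q n$. -/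
lemma digitSum_le (q m : ℕ) (hq : 2 ≤ q) :
    digitSum q m ≤ (Nat.log q m + 1) * (q - 1) := by
  rcases eq_or_ne m 0 with rfl | hm
  · simp [digitSum]
  · have h1 : (Nat.digits q m).length = Nat.log q m + 1 := Nat.digits_len q m (by omega) hm
    have h2 : (Nat.digits q m).sum ≤ (Nat.digits q m).length • (q - 1) :=
      List.sum_le_card_nsmul _ _ (fun x hx => by
        have := Nat.digits_lt_base (by omega) hx; omega)
    simpa [digitSum, h1, smul_eq_mul] using h2

lemma pos_digitSum (q n : ℕ) (hq : 2 ≤ q) (hn : n ≠ 0) : 1 ≤ digitSum q n := by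
  have hne : Nat.digits q n ≠ [] := Nat.digits_ne_nil_iff_ne_zero.mpr hn
  have h1 : (Nat.digits q n).getLast hne ≠ 0 := Nat.getLast_digit_ne_zero q hn
  have h2 : (Nat.digits q n).getLast hne ≤ (Nat.digits q n).sum :=
    List.single_le_sum (fun x _ => Nat.zero_le x) _ (List.getLast_mem hne)
  unfold digitSum; omega

theorem stmt_7 (q : ℕ) (hq : 2 ≤ q) (p : Polynomial ℤ)
    (hdeg : 2 ≤ p.natDegree) (hlead : 0 < p.leadingCoeff)
    (hneg : ∃ i, p.coeff i < 0) :
    ∃ c₂ : ℝ, 0 < c₂ ∧ ∃ n₀ : ℕ, ∀ n : ℕ, n₀ ≤ n →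
      (digitSum q ((p.eval (n : ℤ)).toNat) : ℝ) / (digitSum q n : ℝ) ≤
        c₂ * Real.logb q n := by
  set h := p.natDegree with hh
  set M : ℕ := ∑ i ∈ Finset.range (h + 1), (p.coeff i).natAbs with hM
  have hM0 : 0 < M := by
    have hle : (p.coeff h).natAbs ≤ M := by
      rw [hM]
      exact Finset.single_le_sum (f := fun i => (p.coeff i).natAbs)
        (fun i _ => Nat.zero_le _) (Finset.mem_range.mpr (by omega))
    have hne : p.coeff h ≠ 0 := by
      rw [Polynomial.leadingCoeff] at hlead; exact ne_of_gt hlead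
    have := Int.natAbs_pos.mpr hne
    omega
  have hc : (0:ℝ) < ((q:ℝ) - 1) * (h + 2) := by
    have : (2:ℝ) ≤ q := by exact_mod_cast hq
    have : (0:ℝ) < (q:ℝ) - 1 := by linarith
    positivity
  refine ⟨((q:ℝ) - 1) * (h + 2), hc, max q M, fun n hn => ?_⟩
  have hnq : q ≤ n := le_trans (le_max_left _ _) hn
  have hnM : M ≤ n := le_trans (le_max_right _ _) hn
  have hn0 : n ≠ 0 := by omega
  have hq1 : (1 : ℝ) < q := by exact_mod_cast by omega
  set L := Real.logb q n with hL
  have hL1 : 1 ≤ L := by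
    rw [hL, ← Real.logb_self_eq_one hq1]
    exact Real.logb_le_logb_of_le hq1 (by positivity) (by exact_mod_cast hnq)
  -- bound eval
  set m := (p.eval (n : ℤ)).toNat with hm
  have hmle : m ≤ M * n ^ h := by
    rw [hm, Int.toNat_le]
    calc p.eval (n : ℤ) ≤ |p.eval (n : ℤ)| := le_abs_self _
      _ ≤ ∑ i ∈ Finset.range (h + 1), |p.coeff i * (n : ℤ) ^ i| := by
          rw [Polynomial.eval_eq_sum_range]
          exact Finset.abs_sum_le_sum_abs _ _
      _ ≤ ∑ i ∈ Finset.range (h + 1), ((p.coeff i).natAbs : ℤ) * (n : ℤ) ^ h := by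
          apply Finset.sum_le_sum
          intro i hi
          rw [abs_mul, Int.abs_eq_natAbs]
          apply mul_le_mul_of_nonneg_left _ (by positivity)
          rw [abs_pow, abs_of_nonneg (by positivity : (0:ℤ) ≤ (n:ℤ))]
          exact pow_le_pow_right₀ (by exact_mod_cast Nat.one_le_iff_ne_zero.mpr hn0)
            (Nat.lt_succ_iff.mp (Finset.mem_range.mp hi))
      _ = (M : ℤ) * (n : ℤ) ^ h := by rw [hM]; push_cast; rw [Finset.sum_mul]
      _ = ((M * n ^ h : ℕ) : ℤ) := by push_cast; ring
  -- numerator bound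
  have hlog : (Nat.log q m : ℝ) ≤ (h + 1) * L := by
    calc (Nat.log q m : ℝ) ≤ (Nat.log q (M * n ^ h) : ℝ) := by
          exact_mod_cast Nat.log_mono_right hmle
      _ ≤ Real.logb q ((M * n ^ h : ℕ) : ℝ) := Real.natLog_le_logb _ _
      _ = Real.logb q M + h * L := by
          have hMpos : (0:ℝ) < M := by exact_mod_cast hM0
          have hnpos : (0:ℝ) < n := by exact_mod_cast Nat.pos_of_ne_zero hn0
          push_cast
          rw [Real.logb_mul (ne_of_gt hMpos) (by positivity), Real.logb_pow]
      _ ≤ L + h * L := by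
          have : Real.logb q M ≤ L :=
            Real.logb_le_logb_of_le hq1 (by exact_mod_cast hM0) (by exact_mod_cast hnM)
          linarith
      _ = (h + 1) * L := by ring
  have hnum : (digitSum q m : ℝ) ≤ ((q:ℝ) - 1) * (h + 2) * L := by
    calc (digitSum q m : ℝ) ≤ ((Nat.log q m + 1) * (q - 1) : ℕ) := by
          exact_mod_cast digitSum_le q m hq
      _ = ((Nat.log q m : ℝ) + 1) * ((q : ℝ) - 1) := by
          push_cast [Nat.cast_sub (by omega : 1 ≤ q)]; ring
      _ ≤ ((h + 1) * L + L) * ((q : ℝ) - 1) := by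
          have hq0 : (0:ℝ) ≤ (q:ℝ) - 1 := by linarith
          apply mul_le_mul_of_nonneg_right _ hq0
          linarith
      _ = ((q:ℝ) - 1) * (h + 2) * L := by ring
  have hden : (1 : ℝ) ≤ (digitSum q n : ℝ) := by
    exact_mod_cast pos_digitSum q n hq hn0
  calc (digitSum q m : ℝ) / (digitSum q n : ℝ) ≤ (digitSum q m : ℝ) :=
        div_le_self (by positivity) hden
    _ ≤ ((q:ℝ) - 1) * (h + 2) * L := hnum
end

section
/- Let $q \geq 2$ and let $p(x) \in \mathbb{Z}[x]$ have degree $h \geq 2$, positive leading coefficient, and at least one negative coefficient; let $a_j < 0$ be the negative coefficient of smallest index $j$ (so $a_l \geq 0$ for all $l < j$). Then for every $\varepsilon > 0$ and all sufficiently large $k$, we have $s_q(p(q^k)) > k(q - 1 - \varepsilon)$; in particular $s_q(p(q^k))/s_q(q^k) > (q-1-\varepsilon) \log_q(q^k)$ for infinitely many values $n = q^k$. -/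
lemma digitSum_split {q : ℕ} (hq : 1 < q) (x y m : ℕ) (hy : y < q ^ m) :
    digitSum q (x * q ^ m + y) = digitSum q x + digitSum q y := by
  rcases eq_or_ne x 0 with rfl | hx
  · simp [digitSum]
  have hlen : (Nat.digits q y).length ≤ m := by
    rcases eq_or_ne y 0 with rfl | hy0
    · simp
    · rw [Nat.digits_len q y hq hy0]
      have := Nat.log_lt_of_lt_pow hy0 hy
      omega
  have key := Nat.digits_append_zeroes_append_digits (b := q)
      (k := m - (Nat.digits q y).length) (m := x) (n := y) hq (Nat.pos_of_ne_zero hx)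
  have hm : (Nat.digits q y).length + (m - (Nat.digits q y).length) = m := by omega
  rw [hm] at key
  have hxy : x * q ^ m + y = y + q ^ m * x := by ring
  rw [digitSum, hxy, ← key]
  simp [digitSum, Nat.add_comm]

lemma digitSum_pow_pred {q : ℕ} (hq : 2 ≤ q) (t : ℕ) :
    digitSum q (q ^ t - 1) = (q - 1) * t := by
  induction t with
  | zero => simp [digitSum]
  | succ t ih =>
    obtain ⟨d, hd⟩ : ∃ d, q ^ t = d + 1 :=
      ⟨q ^ t - 1, by have := Nat.one_le_pow t q (by omega); omega⟩
    have h1 : q ^ (t + 1) - 1 = (q ^ t - 1) * q ^ 1 + (q - 1) := by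
      have h2 : q ^ (t + 1) = d * q + q := by rw [pow_succ, hd]; ring
      rw [h2, hd, pow_one]
      have : (d + 1 - 1) * q = d * q := by simp
      rw [this]; omega
    rw [h1, digitSum_split (by omega) _ _ _ (by simp; omega), ih]
    have h3 : digitSum q (q - 1) = q - 1 := by
      rw [digitSum, Nat.digits_of_lt q (q - 1) (by omega) (by omega)]
      simp
    rw [h3]; ring

lemma digitSum_pow {q : ℕ} (hq : 2 ≤ q) (k : ℕ) : digitSum q (q ^ k) = 1 := by
  have h := digitSum_split (q := q) (by omega) 1 0 k (pow_pos (by omega) k)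
  simp at h
  rw [h]
  rw [digitSum, digitSum, Nat.digits_of_lt q 1 one_ne_zero (by omega)]
  simp

set_option maxHeartbeats 2000000 in
theorem stmt_8 (q : ℕ) (hq : 2 ≤ q) (p : Polynomial ℤ)
    (hdeg : 2 ≤ p.natDegree) (hlead : 0 < p.leadingCoeff)
    (j : ℕ) (hj : p.coeff j < 0) (hjmin : ∀ l < j, 0 ≤ p.coeff l)
    (ε : ℝ) (hε : 0 < ε) :
    ∃ K : ℕ, ∀ k : ℕ, K ≤ k →
      ((k : ℝ) * ((q : ℝ) - 1 - ε) < (digitSum q ((p.eval ((q : ℤ) ^ k)).toNat) : ℝ)) ∧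
      ((q : ℝ) - 1 - ε) * Real.logb q ((q : ℝ) ^ k) <
        (digitSum q ((p.eval ((q : ℤ) ^ k)).toNat) : ℝ) / (digitSum q (q ^ k) : ℝ) := by
  have hlead' : 0 < p.coeff p.natDegree := hlead
  have hjh : j < p.natDegree := by
    have hle : j ≤ p.natDegree :=
      Polynomial.le_natDegree_of_ne_zero (fun e => by rw [e] at hj; exact lt_irrefl 0 hj)
    rcases lt_or_eq_of_le hle with h' | h'
    · exact h'
    · exfalso; rw [h'] at hj; omega
  obtain ⟨C, hC⟩ : ∃ C : ℕ, C = ∑ i ∈ Finset.range (p.natDegree + 1), (p.coeff i).natAbs :=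
    ⟨_, rfl⟩
  have habs : ∀ i, i ≤ p.natDegree → (p.coeff i).natAbs ≤ C := fun i hi => by
    rw [hC]
    exact Finset.single_le_sum (f := fun i => (p.coeff i).natAbs) (fun _ _ => Nat.zero_le _)
      (Finset.mem_range.mpr (by omega))
  have hC1 : 1 ≤ C := by
    have h := habs p.natDegree le_rfl
    have h2 : 1 ≤ (p.coeff p.natDegree).natAbs := by omega
    omega
  refine ⟨C + 1 + ⌈((q : ℝ) * C) / ε⌉₊, fun k hk => ?_⟩
  have hkC : C < k := by omega
  obtain ⟨x, hxdef⟩ : ∃ x : ℤ, x = (q : ℤ) ^ k := ⟨_, rfl⟩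
  rw [← hxdef]
  have hq0 : (0 : ℤ) < (q : ℤ) := by exact_mod_cast (by omega : 0 < q)
  have hq1 : (1 : ℤ) ≤ (q : ℤ) := by exact_mod_cast (by omega : 1 ≤ q)
  have hx0 : (0 : ℤ) < x := by rw [hxdef]; exact pow_pos hq0 k
  have hx1 : (1 : ℤ) ≤ x := by rw [hxdef]; exact one_le_pow₀ hq1
  have hCx : (C : ℤ) < x := by
    have h1 : C < 2 ^ k := lt_of_lt_of_le (by omega) (Nat.le_of_lt (Nat.lt_two_pow_self (n := k)))
    have h2 : (2 : ℕ) ^ k ≤ q ^ k := Nat.pow_le_pow_left hq k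
    have h3 : (C : ℕ) < q ^ k := lt_of_lt_of_le h1 h2
    rw [hxdef]
    exact_mod_cast h3
  have hP : p.eval x = ∑ i ∈ Finset.range (p.natDegree + 1), p.coeff i * x ^ i :=
    Polynomial.eval_eq_sum_range x
  obtain ⟨T, hT⟩ : ∃ T : ℤ, T = ∑ i ∈ Finset.range (j + 1), p.coeff i * x ^ i := ⟨_, rfl⟩
  obtain ⟨A, hA⟩ : ∃ A : ℤ,
      A = ∑ i ∈ Finset.Ico (j + 1) (p.natDegree + 1), p.coeff i * x ^ (i - (j + 1)) := ⟨_, rfl⟩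
  have hIco : ∑ i ∈ Finset.Ico (j + 1) (p.natDegree + 1), p.coeff i * x ^ i = A * x ^ (j + 1) := by
    rw [hA, Finset.sum_mul]
    apply Finset.sum_congr rfl
    intro i hi
    rw [Finset.mem_Ico] at hi
    rw [mul_assoc, ← pow_add]
    congr 2
    omega
  have hsplit : p.eval x = A * x ^ (j + 1) + T := by
    rw [hP, ← Finset.sum_range_add_sum_Ico _ (by omega : j + 1 ≤ p.natDegree + 1), hIco, ← hT]
    ring
  have hS0 : 0 ≤ ∑ i ∈ Finset.range j, p.coeff i * x ^ i :=
    Finset.sum_nonneg fun i hi =>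
      mul_nonneg (hjmin i (Finset.mem_range.mp hi)) (pow_nonneg hx0.le i)
  have hSx : (∑ i ∈ Finset.range j, p.coeff i * x ^ i) * x ≤ (C : ℤ) * x ^ j := by
    rw [Finset.sum_mul]
    calc ∑ i ∈ Finset.range j, p.coeff i * x ^ i * x
        ≤ ∑ i ∈ Finset.range j, ((p.coeff i).natAbs : ℤ) * x ^ j := by
          apply Finset.sum_le_sum
          intro i hi
          have hij := Finset.mem_range.mp hi
          have h1 : p.coeff i * x ^ i * x = p.coeff i * x ^ (i + 1) := by
            rw [pow_succ]; ring
          rw [h1]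
          exact mul_le_mul (Int.le_natAbs) (pow_le_pow_right₀ hx1 (by omega))
            (pow_nonneg hx0.le _) (Int.natCast_nonneg _)
      _ ≤ ∑ i ∈ Finset.range (p.natDegree + 1), ((p.coeff i).natAbs : ℤ) * x ^ j :=
          Finset.sum_le_sum_of_subset_of_nonneg (Finset.range_subset_range.mpr (by omega))
            (fun i _ _ => mul_nonneg (Int.natCast_nonneg _) (pow_nonneg hx0.le _))
      _ = (C : ℤ) * x ^ j := by rw [← Finset.sum_mul, hC]; push_cast; ring
  have hSlt : (∑ i ∈ Finset.range j, p.coeff i * x ^ i) < x ^ j := by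
    have h2 : (C : ℤ) * x ^ j < x * x ^ j := mul_lt_mul_of_pos_right hCx (pow_pos hx0 j)
    have h3 : (∑ i ∈ Finset.range j, p.coeff i * x ^ i) * x < x ^ j * x := by
      calc (∑ i ∈ Finset.range j, p.coeff i * x ^ i) * x ≤ (C : ℤ) * x ^ j := hSx
        _ < x * x ^ j := h2
        _ = x ^ j * x := mul_comm _ _
    exact lt_of_mul_lt_mul_right h3 hx0.le
  have hTs : T = (∑ i ∈ Finset.range j, p.coeff i * x ^ i) + p.coeff j * x ^ j := by
    rw [hT]; exact Finset.sum_range_succ _ j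
  have hTub : T ≤ -1 := by
    have h4 : p.coeff j * x ^ j ≤ (-1) * x ^ j :=
      mul_le_mul_of_nonneg_right (by omega) (pow_nonneg hx0.le j)
    have h5 : T + 1 ≤ 0 := by rw [hTs]; nlinarith
    linarith
  have hTlb : -((C : ℤ) * x ^ j) ≤ T := by
    have h6 : -(C : ℤ) ≤ p.coeff j := by have := habs j (le_of_lt hjh); omega
    have h7 : -(C : ℤ) * x ^ j ≤ p.coeff j * x ^ j :=
      mul_le_mul_of_nonneg_right h6 (pow_nonneg hx0.le j)
    rw [hTs]; nlinarith
  have hxj1 : (0 : ℤ) < x ^ (j + 1) := pow_pos hx0 _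
  have hA1 : 1 ≤ A := by
    have key : 1 * x ^ (j + 1) ≤ A * x ^ (j + 1) := by
      rw [one_mul, ← hIco, Finset.sum_Ico_succ_top (by omega : j + 1 ≤ p.natDegree)]
      have hlead2 : x ^ p.natDegree ≤ p.coeff p.natDegree * x ^ p.natDegree :=
        le_mul_of_one_le_left (pow_nonneg hx0.le _) (by omega)
      rcases eq_or_lt_of_le (by omega : j + 1 ≤ p.natDegree) with hcase | hcase
      · rw [← hcase]
        simp only [Finset.Ico_self, Finset.sum_empty, zero_add]
        rw [← hcase] at hlead2
        exact hlead2
      · have hsum' : ∑ i ∈ Finset.Ico (j + 1) p.natDegree, ((p.coeff i).natAbs : ℤ) ≤ (C : ℤ) := by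
          calc ∑ i ∈ Finset.Ico (j + 1) p.natDegree, ((p.coeff i).natAbs : ℤ)
              ≤ ∑ i ∈ Finset.range (p.natDegree + 1), ((p.coeff i).natAbs : ℤ) := by
                apply Finset.sum_le_sum_of_subset_of_nonneg
                · intro i hi; rw [Finset.mem_Ico] at hi; exact Finset.mem_range.mpr (by omega)
                · exact fun i _ _ => Int.natCast_nonneg _
            _ = (C : ℤ) := by rw [hC]; push_cast; ring
        have hmid : -((C : ℤ) * x ^ (p.natDegree - 1)) ≤
            ∑ i ∈ Finset.Ico (j + 1) p.natDegree, p.coeff i * x ^ i := by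
          have step1 : ∑ i ∈ Finset.Ico (j + 1) p.natDegree,
              -(((p.coeff i).natAbs : ℤ) * x ^ (p.natDegree - 1)) ≤
              ∑ i ∈ Finset.Ico (j + 1) p.natDegree, p.coeff i * x ^ i := by
            apply Finset.sum_le_sum
            intro i hi
            rw [Finset.mem_Ico] at hi
            have e1 : -(((p.coeff i).natAbs : ℤ)) * x ^ (p.natDegree - 1)
                ≤ -(((p.coeff i).natAbs : ℤ)) * x ^ i :=
              mul_le_mul_of_nonpos_left (pow_le_pow_right₀ hx1 (by omega)) (by omega)
            have e2 : -(((p.coeff i).natAbs : ℤ)) * x ^ i ≤ p.coeff i * x ^ i :=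
              mul_le_mul_of_nonneg_right (by omega) (pow_nonneg hx0.le _)
            calc -(((p.coeff i).natAbs : ℤ) * x ^ (p.natDegree - 1))
                = -(((p.coeff i).natAbs : ℤ)) * x ^ (p.natDegree - 1) := by ring
              _ ≤ -(((p.coeff i).natAbs : ℤ)) * x ^ i := e1
              _ ≤ p.coeff i * x ^ i := e2
          refine le_trans ?_ step1
          rw [Finset.sum_neg_distrib, ← Finset.sum_mul]
          exact neg_le_neg (mul_le_mul_of_nonneg_right hsum' (pow_nonneg hx0.le _))
        have hpe : x ^ p.natDegree = x ^ (p.natDegree - 1) * x := by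
          rw [← pow_succ]; congr 1; omega
        have hjle : x ^ (j + 1) ≤ x ^ (p.natDegree - 1) := pow_le_pow_right₀ hx1 (by omega)
        have e3 : 0 ≤ x ^ (p.natDegree - 1) * (x - (C : ℤ) - 1) :=
          mul_nonneg (pow_nonneg hx0.le _) (by linarith)
        have e4 : 0 ≤ x ^ (p.natDegree - 1) * x - (C : ℤ) * x ^ (p.natDegree - 1)
            - x ^ (p.natDegree - 1) := by
          calc (0:ℤ) ≤ x ^ (p.natDegree - 1) * (x - (C : ℤ) - 1) := e3
            _ = x ^ (p.natDegree - 1) * x - (C : ℤ) * x ^ (p.natDegree - 1)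
                - x ^ (p.natDegree - 1) := by ring
        linarith [hmid, hlead2, hjle, e4, hpe.le, hpe.ge]
    exact le_of_mul_le_mul_right key hxj1
  -- pass to natural numbers
  obtain ⟨m, hm⟩ : ∃ m : ℕ, m = (j + 1) * k := ⟨_, rfl⟩
  have hqm : (q : ℤ) ^ m = x ^ (j + 1) := by
    rw [hxdef, ← pow_mul, hm, Nat.mul_comm]
  obtain ⟨N, hN⟩ : ∃ N : ℤ, N = x ^ (j + 1) + T := ⟨_, rfl⟩
  have hN1 : 1 ≤ N := by
    have e2 : x ^ (j + 1) = x ^ j * x := pow_succ x j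
    have e1 : 0 ≤ x ^ j * (x - (C : ℤ) - 1) :=
      mul_nonneg (pow_nonneg hx0.le _) (by linarith)
    have e3 : (1 : ℤ) ≤ x ^ j := one_le_pow₀ hx1
    have e1' : 0 ≤ x ^ j * x - (C : ℤ) * x ^ j - x ^ j := by
      calc (0:ℤ) ≤ x ^ j * (x - (C : ℤ) - 1) := e1
        _ = x ^ j * x - (C : ℤ) * x ^ j - x ^ j := by ring
    rw [hN]; linarith [hTlb, e1', e3, e2.le, e2.ge]
  have hNlt : N < x ^ (j + 1) := by rw [hN]; linarith
  have hPN : p.eval x = (A - 1) * x ^ (j + 1) + N := by rw [hsplit, hN]; ring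
  have hA0 : 0 ≤ A - 1 := by linarith
  have hPnat : (p.eval x).toNat = (A - 1).toNat * q ^ m + N.toNat := by
    have hcast : ((((A - 1).toNat * q ^ m + N.toNat : ℕ)) : ℤ) = p.eval x := by
      push_cast [Int.toNat_of_nonneg hA0, Int.toNat_of_nonneg (by linarith : (0 : ℤ) ≤ N)]
      rw [hqm, hPN]
    rw [← hcast, Int.toNat_natCast]
  have hNlt' : N.toNat < q ^ m := by
    have h1 : (N.toNat : ℤ) < (q : ℤ) ^ m := by
      rw [Int.toNat_of_nonneg (by linarith), hqm]; exact hNlt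
    exact_mod_cast h1
  obtain ⟨M, hM⟩ : ∃ M : ℕ, M = (-T).toNat := ⟨_, rfl⟩
  have hMN : N.toNat + M = q ^ m := by
    have h1 : ((N.toNat + M : ℕ) : ℤ) = ((q ^ m : ℕ) : ℤ) := by
      push_cast [hM, Int.toNat_of_nonneg (by linarith : (0 : ℤ) ≤ N),
        Int.toNat_of_nonneg (by linarith : (0 : ℤ) ≤ -T)]
      rw [hqm, hN]; ring
    exact_mod_cast h1
  have hM1 : 1 ≤ M := by
    have h1 : (1 : ℤ) ≤ -T := by linarith
    have h2 : (1 : ℤ) ≤ (M : ℤ) := by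
      rw [hM, Int.toNat_of_nonneg (by linarith : (0 : ℤ) ≤ -T)]; exact h1
    exact_mod_cast h2
  obtain ⟨b, hb⟩ : ∃ b : ℕ, b = C + j * k := ⟨_, rfl⟩
  have hxjq : (q : ℤ) ^ (j * k) = x ^ j := by rw [hxdef, ← pow_mul, Nat.mul_comm]
  have hMb : M ≤ q ^ b := by
    have h1 : (M : ℤ) ≤ (C : ℤ) * x ^ j := by
      rw [hM, Int.toNat_of_nonneg (by linarith : (0 : ℤ) ≤ -T)]; linarith
    have h4 : M ≤ C * q ^ (j * k) := by
      have h5 : (M : ℤ) ≤ ((C * q ^ (j * k) : ℕ) : ℤ) := by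
        push_cast
        rw [hxjq]; exact h1
      exact_mod_cast h5
    calc M ≤ C * q ^ (j * k) := h4
      _ ≤ q ^ C * q ^ (j * k) :=
          Nat.mul_le_mul_right _ (le_trans (Nat.le_of_lt (Nat.lt_two_pow_self (n := C)))
            (Nat.pow_le_pow_left hq C))
      _ = q ^ b := by rw [hb, pow_add]
  have hmjk : m = j * k + k := by rw [hm]; ring
  have hbm : b < m := by rw [hb, hmjk]; generalize j * k = w; omega
  have hqbm : q ^ b ≤ q ^ m := Nat.pow_le_pow_right (by omega) (le_of_lt hbm)
  have hkey : N.toNat = (q ^ (m - b) - 1) * q ^ b + (q ^ b - M) := by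
    have e1 : (q ^ (m - b) - 1) * q ^ b = q ^ m - q ^ b := by
      rw [Nat.sub_mul, ← pow_add, one_mul, Nat.sub_add_cancel (le_of_lt hbm)]
    rw [e1]
    have h1 := hMN
    have h2 := hMb
    have h3 := hqbm
    generalize q ^ m = P at h1 h3 ⊢
    generalize q ^ b = Q at h2 h3 ⊢
    omega
  have hqb0 : 0 < q ^ b := pow_pos (by omega) b
  have hds : (q - 1) * (k - C) ≤ digitSum q ((p.eval x).toNat) := by
    rw [hPnat, digitSum_split (by omega) _ _ _ hNlt', hkey,
      digitSum_split (by omega) _ _ _ (Nat.sub_lt hqb0 hM1),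
      digitSum_pow_pred hq]
    have hmb : m - b = k - C := by rw [hmjk, hb]; generalize j * k = w; omega
    rw [hmb]
    calc (q - 1) * (k - C) ≤ (q - 1) * (k - C) + digitSum q (q ^ b - M) :=
          Nat.le_add_right _ _
      _ ≤ digitSum q ((A - 1).toNat) + ((q - 1) * (k - C) + digitSum q (q ^ b - M)) :=
          Nat.le_add_left _ _
  -- the real-number estimates
  have hcast2 : (((q - 1) * (k - C) : ℕ) : ℝ) = ((q : ℝ) - 1) * ((k : ℝ) - C) := by
    rw [Nat.cast_mul, Nat.cast_sub (by omega : 1 ≤ q), Nat.cast_sub (by omega : C ≤ k)]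
    norm_num
  have hkε : ((q : ℝ) - 1) * (C : ℝ) < (k : ℝ) * ε := by
    have hceil : (⌈((q : ℝ) * C) / ε⌉₊ : ℝ) ≤ (k : ℝ) := by
      exact_mod_cast Nat.cast_le.mpr (by omega : ⌈((q : ℝ) * C) / ε⌉₊ ≤ k)
    have h1 : ((q : ℝ) * C) / ε ≤ k := le_trans (Nat.le_ceil _) hceil
    have h2 : (q : ℝ) * C ≤ k * ε := by
      rw [div_le_iff₀ hε] at h1; linarith
    have hC1' : (1 : ℝ) ≤ (C : ℝ) := by exact_mod_cast hC1
    have e : ((q : ℝ) - 1) * (C : ℝ) = (q : ℝ) * C - C := by ring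
    linarith [h2, hC1', e.le, e.ge]
  have hfin : (k : ℝ) * ((q : ℝ) - 1 - ε) < (digitSum q ((p.eval x).toNat) : ℝ) := by
    have h1 : (((q - 1) * (k - C) : ℕ) : ℝ) ≤ (digitSum q ((p.eval x).toNat) : ℝ) := by
      exact_mod_cast hds
    rw [hcast2] at h1
    have e : (k : ℝ) * ((q : ℝ) - 1 - ε) =
        ((q : ℝ) - 1) * ((k : ℝ) - C) + (((q : ℝ) - 1) * C - k * ε) := by ring
    linarith [h1, hkε, e.le, e.ge]
  refine ⟨hfin, ?_⟩
  have hlogb : Real.logb q ((q : ℝ) ^ k) = k := by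
    rw [Real.logb_pow, Real.logb_self_eq_one (by exact_mod_cast (by omega : 1 < q)), mul_one]
  rw [hlogb, digitSum_pow hq k]
  norm_num
  linarith [hfin]
end

section
/- Let $h \geq 2$ and $m \geq 3$ be integers and let $t_m(x) = m x^4 + m x^3 - x^2 + m x + m$. Write $t_m(x)^h = \sum_{i=0}^{4h} c_{i,h}(m) x^i$. Then every coefficient satisfies $0 < c_{i,h}(m) \leq (2mh)^h$ for $i = 0, 1, \dots, 4h$. -/
open Polynomial

/-- The polynomial `t_m(x) = m x^4 + m x^3 - x^2 + m x + m`. -/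
noncomputable def tPoly (m : ℤ) : Polynomial ℤ :=
  C m * X ^ 4 + C m * X ^ 3 - X ^ 2 + C m * X + C m

lemma tsq_eq (m : ℤ) : tPoly m ^ 2 =
    C (m^2) * X^8 + C (2*m^2) * X^7 + C (m^2-2*m) * X^6 + C (2*m^2-2*m) * X^5 +
    C (4*m^2+1) * X^4 + C (2*m^2-2*m) * X^3 + C (m^2-2*m) * X^2 + C (2*m^2) * X + C (m^2) := by
  unfold tPoly
  simp only [map_pow, map_mul, map_add, map_sub, map_one, map_ofNat]
  ring

lemma deg_t (m : ℤ) : (tPoly m).natDegree ≤ 4 := by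
  unfold tPoly; compute_degree

lemma deg_tpow (m : ℤ) (h : ℕ) : ((tPoly m) ^ h).natDegree ≤ 4 * h :=
  le_trans natDegree_pow_le (by have := deg_t m; nlinarith)

lemma tcube_eq (m : ℤ) : tPoly m ^ 3 =
    C (m^3) * X^12 + C (3*m^3) * X^11 + C (3*m^3-3*m^2) * X^10 + C (4*m^3-6*m^2) * X^9 +
    C (9*m^3-3*m^2+3*m) * X^8 + C (9*m^3-6*m^2+3*m) * X^7 + C (6*m^3-12*m^2-1) * X^6 +
    C (9*m^3-6*m^2+3*m) * X^5 + C (9*m^3-3*m^2+3*m) * X^4 + C (4*m^3-6*m^2) * X^3 +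
    C (3*m^3-3*m^2) * X^2 + C (3*m^3) * X + C (m^3) := by
  unfold tPoly
  simp only [map_pow, map_mul, map_add, map_sub, map_one, map_ofNat]
  ring

lemma conv_pos {p q : Polynomial ℤ} (hp : ∀ i, 0 ≤ p.coeff i) (hq : ∀ i, 0 ≤ q.coeff i)
    {a b : ℕ} (ha : 0 < p.coeff a) (hb : 0 < q.coeff b) : 0 < (p * q).coeff (a + b) := by
  rw [coeff_mul]
  refine lt_of_lt_of_le (mul_pos ha hb) ?_
  exact Finset.single_le_sum (f := fun x => p.coeff x.1 * q.coeff x.2)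
    (a := ((a, b) : ℕ × ℕ)) (fun x _ => mul_nonneg (hp x.1) (hq x.2)) (Finset.HasAntidiagonal.mem_antidiagonal.mpr rfl)

lemma tsq_pos (m : ℤ) (hm : 3 ≤ m) : ∀ i ≤ 8, 0 < (tPoly m ^ 2).coeff i := by
  intro i hi
  rw [tsq_eq]
  interval_cases i <;>
    (simp only [coeff_add, coeff_sub, coeff_C_mul, coeff_X_pow, coeff_C, coeff_X]; norm_num) <;> nlinarith

lemma tcube_pos (m : ℤ) (hm : 3 ≤ m) : ∀ i ≤ 12, 0 < (tPoly m ^ 3).coeff i := by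
  intro i hi
  have h0 : (0:ℤ) ≤ m := by linarith
  have h3 : (0:ℤ) ≤ m - 3 := by linarith
  rw [tcube_eq]
  interval_cases i <;>
    (simp only [coeff_add, coeff_sub, coeff_C_mul, coeff_X_pow, coeff_C, coeff_X]; norm_num) <;>
    nlinarith [mul_nonneg (mul_nonneg h3 h0) h0, mul_nonneg h3 h0, mul_nonneg h0 h0,
      mul_nonneg (mul_nonneg h0 h0) h0]

lemma tpow_pos (m : ℤ) (hm : 3 ≤ m) : ∀ h, 2 ≤ h → ∀ i ≤ 4 * h, 0 < ((tPoly m) ^ h).coeff i := by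
  intro h
  induction h using Nat.strong_induction_on with
  | _ h ih =>
    intro hh i hi
    rcases Nat.lt_or_ge h 4 with h4 | h4
    · interval_cases h
      · exact tsq_pos m hm i (by omega)
      · exact tcube_pos m hm i (by omega)
    · have hh2 : 2 ≤ h - 2 := by omega
      have ihp := ih (h - 2) (by omega) hh2
      have nn1 : ∀ j, 0 ≤ ((tPoly m) ^ (h - 2)).coeff j := by
        intro j
        rcases le_or_gt j (4 * (h - 2)) with hj | hj
        · exact le_of_lt (ihp j hj)
        · rw [coeff_eq_zero_of_natDegree_lt (lt_of_le_of_lt (deg_tpow m _) hj)]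
      have nn2 : ∀ j, 0 ≤ ((tPoly m) ^ 2).coeff j := by
        intro j
        rcases le_or_gt j 8 with hj | hj
        · exact le_of_lt (tsq_pos m hm j hj)
        · rw [coeff_eq_zero_of_natDegree_lt (lt_of_le_of_lt (deg_tpow m 2) hj)]
      have hsplit : (tPoly m) ^ h = (tPoly m) ^ (h - 2) * (tPoly m) ^ 2 := by
        rw [← pow_add]; congr 1; omega
      set a := min i (4 * (h - 2)) with ha
      have hab : a + (i - a) = i := by omega
      have hb : i - a ≤ 8 := by omega
      rw [hsplit, ← hab]
      exact conv_pos nn1 nn2 (ihp a (by omega)) (tsq_pos m hm _ hb)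

noncomputable def sPoly (m : ℤ) : Polynomial ℤ := C m * (1 + X + X ^ 2 + X ^ 3 + X ^ 4)

lemma s_nonneg (m : ℤ) (hm : 0 ≤ m) : ∀ i, 0 ≤ (sPoly m).coeff i := by
  intro i
  unfold sPoly
  simp only [mul_add, mul_one, coeff_add, coeff_C_mul, coeff_X_pow, coeff_C, coeff_X]
  split_ifs <;> simp <;> positivity

lemma t_dom (m : ℤ) (hm : 1 ≤ m) : ∀ i, |(tPoly m).coeff i| ≤ (sPoly m).coeff i := by
  intro i
  unfold tPoly sPoly
  simp only [mul_add, mul_one, coeff_add, coeff_sub, coeff_C_mul, coeff_X_pow, coeff_C, coeff_X]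
  rcases Nat.lt_or_ge i 5 with h5 | h5
  · interval_cases i <;> norm_num [abs_le] <;> omega
  · rw [if_neg (by omega : ¬ i = 4), if_neg (by omega : ¬ i = 3), if_neg (by omega : ¬ i = 2),
      if_neg (by omega : ¬ 1 = i), if_neg (by omega : ¬ i = 0)]
    simp

lemma dom_pow {p q : Polynomial ℤ} (hd : ∀ i, |p.coeff i| ≤ q.coeff i) :
    ∀ h i, |(p ^ h).coeff i| ≤ (q ^ h).coeff i := by
  intro h
  induction h with
  | zero => intro i; simp [coeff_one]; split_ifs <;> norm_num
  | succ n ihn =>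
    intro i
    rw [pow_succ, pow_succ, coeff_mul, coeff_mul]
    refine le_trans (Finset.abs_sum_le_sum_abs _ _) (Finset.sum_le_sum ?_)
    intro x _
    rw [abs_mul]
    exact mul_le_mul (ihn x.1) (hd x.2) (abs_nonneg _) (le_trans (abs_nonneg _) (ihn x.1))

lemma coeff_le_eval_one {q : Polynomial ℤ} (hq : ∀ i, 0 ≤ q.coeff i) (i : ℕ) :
    q.coeff i ≤ q.eval 1 := by
  rw [eval_eq_sum, Polynomial.sum_def]
  simp only [one_pow, mul_one]
  rcases eq_or_ne (q.coeff i) 0 with h0 | h0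
  · rw [h0]
    exact Finset.sum_nonneg fun j _ => hq j
  · exact Finset.single_le_sum (f := fun j => q.coeff j) (fun j _ => hq j)
      (mem_support_iff.mpr h0)

lemma s_eval (m : ℤ) : (sPoly m).eval 1 = 5 * m := by
  unfold sPoly; simp; ring

lemma nonneg_pow {q : Polynomial ℤ} (hq : ∀ i, 0 ≤ q.coeff i) (h i : ℕ) :
    0 ≤ (q ^ h).coeff i :=
  le_trans (abs_nonneg _)
    (dom_pow (fun j => le_of_eq (abs_of_nonneg (hq j))) h i)

theorem stmt_10 (h m : ℕ) (hh : 2 ≤ h) (hm : 3 ≤ m) :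
    ∀ i ≤ 4 * h, 0 < ((tPoly (m : ℤ)) ^ h).coeff i ∧
      ((tPoly (m : ℤ)) ^ h).coeff i ≤ (2 * (m : ℤ) * h) ^ h := by
  intro i hi
  have hmz : (3:ℤ) ≤ (m:ℤ) := by exact_mod_cast hm
  refine ⟨tpow_pos _ hmz h hh i hi, ?_⟩
  rcases Nat.lt_or_ge h 3 with h3 | h3
  · have : h = 2 := by omega
    subst this
    have hi8 : i ≤ 8 := by omega
    rw [tsq_eq]
    interval_cases i <;>
      (simp only [coeff_add, coeff_sub, coeff_C_mul, coeff_X_pow, coeff_C, coeff_X]; push_cast;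
        norm_num) <;> nlinarith
  · have hb : ((tPoly (m:ℤ)) ^ h).coeff i ≤ (5 * (m:ℤ)) ^ h := by
      calc ((tPoly (m:ℤ)) ^ h).coeff i ≤ |((tPoly (m:ℤ)) ^ h).coeff i| := le_abs_self _
        _ ≤ ((sPoly (m:ℤ)) ^ h).coeff i := dom_pow (t_dom _ (by linarith)) h i
        _ ≤ ((sPoly (m:ℤ)) ^ h).eval 1 :=
            coeff_le_eval_one (nonneg_pow (s_nonneg _ (by linarith)) h) i
        _ = (5 * (m:ℤ)) ^ h := by rw [eval_pow, s_eval]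
    refine le_trans hb (pow_le_pow_left₀ (by linarith) ?_ h)
    have hhz : (3:ℤ) ≤ (h:ℤ) := by exact_mod_cast h3
    nlinarith
end

section
/- For every integer $q \geq 2$ and every polynomial $p(x) \in \mathbb{Z}[x]$ of degree $h \geq 2$ with positive leading coefficient, there exists a constant $C_0 > 0$, depending only on $p$ and $q$, such that there are infinitely many positive integers $n$ with $s_q(p(n))/s_q(n) \leq C_0 / \log n$. -/
namespace DS
variable {q : ℕ}

lemma ds_lt (hq : 2 ≤ q) {a : ℕ} (ha : a < q) : digitSum q a = a := by
  rcases Nat.eq_zero_or_pos a with h | h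
  · simp [h, digitSum]
  · unfold digitSum
    rw [Nat.digits_def' (by omega : 1 < q) h, Nat.mod_eq_of_lt ha, Nat.div_eq_of_lt ha]
    simp

lemma ds_step (hq : 2 ≤ q) (a r : ℕ) (ha : a < q) :
    digitSum q (a + q * r) = a + digitSum q r := by
  rcases Nat.eq_zero_or_pos (a + q * r) with h | h
  · have ha0 : a = 0 := by omega
    have hr0 : r = 0 := by nlinarith
    simp [ha0, hr0, digitSum]
  · unfold digitSum
    rw [Nat.digits_def' (by omega : 1 < q) h]
    have hmod : (a + q * r) % q = a := by
      rw [Nat.add_mul_mod_self_left, Nat.mod_eq_of_lt ha]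
    have hdiv : (a + q * r) / q = r := by
      rw [Nat.add_mul_div_left _ _ (by omega : 0 < q), Nat.div_eq_of_lt ha]; omega
    rw [hmod, hdiv, List.sum_cons]

lemma ds_pow_mul (hq : 2 ≤ q) : ∀ (m : ℕ) {a : ℕ} (r : ℕ), a < q ^ m →
    digitSum q (a + q ^ m * r) = digitSum q a + digitSum q r := by
  intro m
  induction m with
  | zero => intro a r ha
            have : a = 0 := by simpa using ha
            simp [this, digitSum]
  | succ m ih =>
      intro a r ha
      have hq0 : 0 < q := by omega
      have hpr : q ^ (m+1) * r = q * (q ^ m * r) := by ring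
      have key : a + q ^ (m + 1) * r = a % q + q * (a / q + q ^ m * r) := by
        conv_lhs => rw [← Nat.div_add_mod a q, hpr]
        ring
      have hdivlt : a / q < q ^ m := by
        rw [Nat.div_lt_iff_lt_mul hq0]
        calc a < q ^ (m+1) := ha
        _ = q ^ m * q := by ring
      rw [key, ds_step hq _ _ (Nat.mod_lt _ hq0), ih _ hdivlt]
      have hsplit : a = a % q + q * (a / q) := by
        have := Nat.div_add_mod a q; omega
      have : digitSum q a = a % q + digitSum q (a / q) := by
        conv_lhs => rw [hsplit]
        rw [ds_step hq _ _ (Nat.mod_lt _ hq0)]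
      omega

lemma ds_blocks (hq : 2 ≤ q) (m : ℕ) : ∀ (K : ℕ) (c : ℕ → ℕ), (∀ k, k < K → c k < q ^ m) →
    digitSum q (∑ k ∈ Finset.range K, c k * (q ^ m) ^ k)
      = ∑ k ∈ Finset.range K, digitSum q (c k) := by
  intro K
  induction K with
  | zero => intro c _; simp [digitSum]
  | succ K ih =>
      intro c hc
      rw [Finset.sum_range_succ']
      have h2 : ∑ k ∈ Finset.range K, c (k+1) * (q ^ m) ^ (k+1)
          = q ^ m * ∑ k ∈ Finset.range K, c (k+1) * (q ^ m) ^ k := by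
        rw [Finset.mul_sum]
        exact Finset.sum_congr rfl (fun k _ => by ring)
      rw [h2]
      rw [show q ^ m * (∑ k ∈ Finset.range K, c (k+1) * (q ^ m) ^ k) + c 0 * (q^m)^0
          = c 0 + q ^ m * ∑ k ∈ Finset.range K, c (k+1) * (q ^ m) ^ k by ring]
      rw [ds_pow_mul hq m _ (hc 0 (by omega)),
        ih (fun k => c (k+1)) (fun k hk => hc (k+1) (by omega))]
      rw [Finset.sum_range_succ']
      omega

lemma ds_pow_sub_one (hq : 2 ≤ q) : ∀ i : ℕ, digitSum q (q ^ i - 1) = i * (q - 1) := by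
  intro i
  induction i with
  | zero => simp [digitSum]
  | succ i ih =>
      have h1 : 1 ≤ q ^ i := Nat.one_le_pow _ _ (by omega)
      have hms := Nat.mul_sub q (q ^ i) 1
      have key : q ^ (i+1) - 1 = (q - 1) + q * (q ^ i - 1) := by
        have h4 : q ^ (i+1) = q * q ^ i := by ring
        have h5 : q * 1 ≤ q * q ^ i := Nat.mul_le_mul_left _ h1
        omega
      rw [key, ds_step hq _ _ (by omega), ih]
      set t := q - 1 with ht
      ring

lemma ds_lower (hq : 2 ≤ q) {M j m : ℕ} (hM : 1 ≤ M) (hMj : M ≤ q ^ j) (hjm : j ≤ m) :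
    (m - j) * (q - 1) ≤ digitSum q (q ^ m - M) := by
  have h1 : 1 ≤ q ^ j := Nat.one_le_pow _ _ (by omega)
  have h2 : 1 ≤ q ^ (m - j) := Nat.one_le_pow _ _ (by omega)
  have hsplit : q ^ m = q ^ j * q ^ (m - j) := by
    rw [← pow_add]; congr 1; omega
  have key : q ^ m - M = (q ^ j - M) + q ^ j * (q ^ (m-j) - 1) := by
    rw [hsplit]
    have h5 : q ^ j * 1 ≤ q ^ j * q ^ (m-j) := Nat.mul_le_mul_left _ h2
    have := Nat.mul_sub (q ^ j) (q ^ (m-j)) 1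
    omega
  rw [key, ds_pow_mul hq j _ (by omega), ds_pow_sub_one hq]
  omega

end DS

open Polynomial

lemma evPos (P : ℤ[X]) (d : ℕ) (h1 : 1 ≤ P.coeff d) (h0 : ∀ n, d < n → P.coeff n = 0) :
    ∃ T0 : ℕ, ∀ T : ℕ, T0 ≤ T → 1 ≤ P.eval (T : ℤ) := by
  classical
  set K : ℤ := ∑ i ∈ Finset.range d, |P.coeff i| with hK
  have hK0 : 0 ≤ K := Finset.sum_nonneg fun i _ => abs_nonneg _
  refine ⟨(K + 1).toNat, fun T hT => ?_⟩
  have hTK : K + 1 ≤ (T : ℤ) := by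
    have h := Int.toNat_of_nonneg (by omega : (0:ℤ) ≤ K + 1)
    have h2 : ((K+1).toNat : ℤ) ≤ (T : ℤ) := by exact_mod_cast Nat.cast_le.mpr hT
    omega
  have hT1 : (1:ℤ) ≤ (T:ℤ) := by omega
  have hdeg : P.natDegree < d + 1 := by
    rcases Nat.lt_or_ge P.natDegree (d+1) with h | h
    · exact h
    · exfalso
      have := h0 P.natDegree (by omega)
      have hne : P ≠ 0 := fun hP => by simp [hP] at h1
      exact (Polynomial.leadingCoeff_ne_zero.mpr hne) this
  have heval : P.eval (T:ℤ) = ∑ i ∈ Finset.range (d+1), P.coeff i * (T:ℤ)^i :=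
    Polynomial.eval_eq_sum_range' hdeg _
  rw [heval, Finset.sum_range_succ]
  have hpow1 : (1:ℤ) ≤ (T:ℤ)^d := one_le_pow₀ hT1
  rcases Nat.eq_zero_or_pos d with hd0 | hd0
  · subst hd0; simpa using h1
  -- d ≥ 1
  have hbound : ∀ i ∈ Finset.range d, -( |P.coeff i| * (T:ℤ)^(d-1)) ≤ P.coeff i * (T:ℤ)^i := by
    intro i hi
    have hi' : i < d := Finset.mem_range.mp hi
    have hp1 : (0:ℤ) ≤ (T:ℤ)^i := pow_nonneg (by omega) _
    have hple : (T:ℤ)^i ≤ (T:ℤ)^(d-1) := pow_le_pow_right₀ hT1 (by omega)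
    calc -(|P.coeff i| * (T:ℤ)^(d-1)) ≤ -(|P.coeff i| * (T:ℤ)^i) := by
          have := mul_le_mul_of_nonneg_left hple (abs_nonneg (P.coeff i))
          omega
      _ ≤ P.coeff i * (T:ℤ)^i := by
          have h5 : -|P.coeff i| ≤ P.coeff i := neg_abs_le _
          nlinarith
  have hsum : -(K * (T:ℤ)^(d-1)) ≤ ∑ i ∈ Finset.range d, P.coeff i * (T:ℤ)^i := by
    have := Finset.sum_le_sum hbound
    calc -(K * (T:ℤ)^(d-1)) = ∑ i ∈ Finset.range d, -( |P.coeff i| * (T:ℤ)^(d-1)) := by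
          rw [Finset.sum_neg_distrib, hK, Finset.sum_mul]
      _ ≤ _ := this
  have hmain : (K+1) * (T:ℤ)^(d-1) ≤ P.coeff d * (T:ℤ)^d := by
    have hTd : (T:ℤ)^d = (T:ℤ) * (T:ℤ)^(d-1) := by
      conv_lhs => rw [show d = 1 + (d-1) by omega]
      rw [pow_add, pow_one]
    have hp : (0:ℤ) ≤ (T:ℤ)^(d-1) := pow_nonneg (by omega) _
    calc (K+1) * (T:ℤ)^(d-1) ≤ (T:ℤ) * (T:ℤ)^(d-1) := mul_le_mul_of_nonneg_right hTK hp
      _ = (T:ℤ)^d := hTd.symm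
      _ ≤ P.coeff d * (T:ℤ)^d := by nlinarith [pow_nonneg (show (0:ℤ) ≤ T by omega) d]
  have hlast : (1:ℤ) ≤ (T:ℤ)^(d-1) := one_le_pow₀ hT1
  nlinarith


lemma exists_taylor_pos (p : ℤ[X]) (hlead : 0 < p.leadingCoeff) :
    ∃ T : ℕ, ∀ i ≤ p.natDegree, 1 ≤ (taylor ((T:ℕ) : ℤ) p).coeff i := by
  classical
  set h := p.natDegree with hh
  have H : ∀ i, ∃ T0 : ℕ, ∀ T : ℕ, T0 ≤ T → (i ≤ h → 1 ≤ (taylor ((T:ℕ):ℤ) p).coeff i) := by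
    intro i
    rcases le_or_gt i h with hi | hi
    · have hc1 : 1 ≤ (hasseDeriv i p).coeff (h - i) := by
        rw [Polynomial.hasseDeriv_coeff]
        have he : h - i + i = h := by omega
        rw [he]
        have hch : 1 ≤ (h.choose i : ℤ) := by
          exact_mod_cast Nat.one_le_iff_ne_zero.mpr (Nat.choose_pos hi).ne'
        have hpc : 1 ≤ p.coeff h := hlead
        nlinarith
      have hc0 : ∀ n, h - i < n → (hasseDeriv i p).coeff n = 0 := by
        intro n hn
        rw [Polynomial.hasseDeriv_coeff]
        have : p.coeff (n + i) = 0 := by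
          apply Polynomial.coeff_eq_zero_of_natDegree_lt
          omega
        simp [this]
      obtain ⟨T0, hT0⟩ := evPos _ _ hc1 hc0
      exact ⟨T0, fun T hT _ => by rw [Polynomial.taylor_coeff]; exact hT0 T hT⟩
    · exact ⟨0, fun T _ hih => absurd hih (by omega)⟩
  choose T0 hT0 using H
  refine ⟨(Finset.range (h+1)).sup T0, fun i hi => ?_⟩
  exact hT0 i _ (Finset.le_sup (Finset.mem_range.mpr (by omega))) hi

noncomputable def fg : ℤ[X] := 2*X^4 + 3*X^3 - X^2 + 2*X + 1

noncomputable def w2 : Polynomial ℕ := 4*X^8 + 12*X^7 + 5*X^6 + 2*X^5 + 17*X^4 + 2*X^3 + 2*X^2 + 4*X + 1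

noncomputable def w3 : Polynomial ℕ := 8*X^12 + 36*X^11 + 42*X^10 + 15*X^9 + 63*X^8 + 75*X^7 + 2*X^6
      + 48*X^5 + 33*X^4 + 5*X^3 + 9*X^2 + 6*X + 1

lemma fg_f2 : fg^2 = w2.map (Nat.castRingHom ℤ) := by
  unfold fg w2
  simp only [Polynomial.map_add, Polynomial.map_mul, Polynomial.map_pow,
    Polynomial.map_ofNat, Polynomial.map_one, Polynomial.map_X]
  ring

lemma fg_f3 : fg^3 = w3.map (Nat.castRingHom ℤ) := by
  unfold fg w3
  simp only [Polynomial.map_add, Polynomial.map_mul, Polynomial.map_pow,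
    Polynomial.map_ofNat, Polynomial.map_one, Polynomial.map_X]
  ring

lemma fg_coeff2 : fg.coeff 2 = -1 := by
  unfold fg; simp [coeff_add, coeff_sub, coeff_X_pow, coeff_one, coeff_X]

lemma fg_coeff_nonneg {k : ℕ} (hk : k ≠ 2) : 0 ≤ fg.coeff k := by
  unfold fg
  simp only [coeff_add, coeff_sub, coeff_X_pow, coeff_one, coeff_X, coeff_ofNat_mul]
  split_ifs <;> omega

lemma fg_sq_nonneg (k : ℕ) : 0 ≤ (fg^2).coeff k := by
  rw [fg_f2, Polynomial.coeff_map]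
  exact Int.natCast_nonneg _

lemma fg_sq_coeff2 : 1 ≤ (fg^2).coeff 2 := by
  have h : fg^2 = 4*X^8 + 12*X^7 + 5*X^6 + 2*X^5 + 17*X^4 + 2*X^3 + 2*X^2 + 4*X + 1 := by
    unfold fg; ring
  rw [h]
  simp only [coeff_add, coeff_X_pow, coeff_one, coeff_X, coeff_ofNat_mul]
  norm_num

lemma fg_cube_nonneg (k : ℕ) : 0 ≤ (fg^3).coeff k := by
  rw [fg_f3, Polynomial.coeff_map]
  exact Int.natCast_nonneg _

lemma fg_pow_nonneg : ∀ i, 2 ≤ i → ∀ k, 0 ≤ (fg^i).coeff k := by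
  intro i
  induction i using Nat.strong_induction_on with
  | _ i ih =>
    intro hi k
    match i, hi with
    | 2, _ => exact fg_sq_nonneg k
    | 3, _ => exact fg_cube_nonneg k
    | (j+4), _ =>
      have hj : fg^(j+4) = fg^(j+2) * fg^2 := by ring
      rw [hj, Polynomial.coeff_mul]
      apply Finset.sum_nonneg
      intro x _
      exact mul_nonneg (ih (j+2) (by omega) (by omega) x.1) (fg_sq_nonneg x.2)

lemma natDegree_fg_le : fg.natDegree ≤ 4 := by
  unfold fg; compute_degree

section main
variable (p : ℤ[X]) (T : ℕ)

lemma gcoeff_nonneg (hdeg : 2 ≤ p.natDegree)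
    (hA : ∀ i ≤ p.natDegree, 1 ≤ (taylor ((T:ℕ):ℤ) p).coeff i) :
    ∀ k, 0 ≤ ((taylor ((T:ℕ):ℤ) p).comp (C ((taylor ((T:ℕ):ℤ) p).coeff 1) * fg)).coeff k := by
  classical
  intro k
  set P := taylor ((T:ℕ):ℤ) p with hP
  set M : ℤ := P.coeff 1 with hM
  have hMpos : 1 ≤ M := hA 1 (by omega)
  have hA2 : 1 ≤ P.coeff 2 := hA 2 (by omega)
  set u : ℤ[X] := C M * fg with hu
  have hcomp : P.comp u = ∑ i ∈ P.support, C (P.coeff i) * u ^ i := by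
    rw [Polynomial.comp_eq_sum_left, Polynomial.sum_def]
  have hsupp : P.support ⊆ Finset.range (p.natDegree + 1) := by
    have := Polynomial.supp_subset_range_natDegree_succ (p := P)
    rwa [Polynomial.natDegree_taylor] at this
  have hAsupp : ∀ i ∈ P.support, 1 ≤ P.coeff i := by
    intro i hi
    exact hA i (by have := hsupp hi; simp only [Finset.mem_range] at this; omega)
  have h1mem : (1:ℕ) ∈ P.support := Polynomial.mem_support_iff.mpr (by omega)
  have h2mem : (2:ℕ) ∈ P.support := Polynomial.mem_support_iff.mpr (by omega)
  have hucoeff : ∀ i k', (u ^ i).coeff k' = M ^ i * (fg ^ i).coeff k' := by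
    intro i k'
    rw [hu, mul_pow, ← Polynomial.C_pow, Polynomial.coeff_C_mul]
  rw [hcomp, Polynomial.finset_sum_coeff]
  rw [Finset.sum_eq_sum_sdiff_singleton_add h1mem,
      Finset.sum_eq_sum_sdiff_singleton_add (Finset.mem_sdiff.mpr ⟨h2mem, by simp⟩)]
  have hrest : 0 ≤ ∑ i ∈ (P.support \ {1}) \ {2}, (C (P.coeff i) * u ^ i).coeff k := by
    apply Finset.sum_nonneg
    intro i hi
    simp only [Finset.mem_sdiff, Finset.mem_singleton] at hi
    obtain ⟨⟨hiS, hi1⟩, hi2⟩ := hi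
    rw [Polynomial.coeff_C_mul, hucoeff]
    have hAi : 0 ≤ P.coeff i := le_trans zero_le_one (hAsupp i hiS)
    have hM0 : (0:ℤ) ≤ M := by omega
    rcases Nat.eq_zero_or_pos i with h0 | h0
    · subst h0
      simp only [pow_zero, Polynomial.coeff_one]
      split_ifs
      · positivity
      · simp
    · have hi3 : 2 ≤ i := by omega
      have hfi := fg_pow_nonneg i hi3 k
      have hMi : (0:ℤ) ≤ M ^ i := pow_nonneg hM0 i
      exact mul_nonneg hAi (mul_nonneg hMi hfi)
  have hkey : 0 ≤ (C (P.coeff 2) * u ^ 2).coeff k + (C (P.coeff 1) * u ^ 1).coeff k := by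
    rw [Polynomial.coeff_C_mul, Polynomial.coeff_C_mul, hucoeff, hucoeff]
    simp only [pow_one]
    have hM0 : (0:ℤ) ≤ M := by omega
    rcases eq_or_ne k 2 with hk | hk
    · subst hk
      have h2 := fg_sq_coeff2
      rw [fg_coeff2, ← hM]
      have e1 : M * M ≤ M ^ 2 * (fg ^ 2).coeff 2 := by nlinarith
      have e2 : M ^ 2 * (fg ^ 2).coeff 2 ≤ P.coeff 2 * (M ^ 2 * (fg ^ 2).coeff 2) := by
        nlinarith
      nlinarith
    · have hf := fg_coeff_nonneg hk
      have hf2 := fg_sq_nonneg k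
      have hA20 : (0:ℤ) ≤ P.coeff 2 := by omega
      have hA10 : (0:ℤ) ≤ P.coeff 1 := by rw [← hM]; omega
      have hM2 : (0:ℤ) ≤ M^2 := sq_nonneg _
      exact add_nonneg (mul_nonneg hA20 (mul_nonneg hM2 hf2))
        (mul_nonneg hA10 (mul_nonneg hM0 hf))
  linarith
end main


lemma sum_blocks_lt (Q : ℕ) (hQ : 1 ≤ Q) : ∀ (K : ℕ) (c : ℕ → ℕ), (∀ k, k < K → c k < Q) →
    (∑ k ∈ Finset.range K, c k * Q ^ k) < Q ^ K := by
  intro K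
  induction K with
  | zero => intro c _; simpa using by positivity
  | succ K ih =>
      intro c hc
      rw [Finset.sum_range_succ]
      have h1 := ih c (fun k hk => hc k (by omega))
      have h2 : c K * Q ^ K ≤ (Q - 1) * Q ^ K := by
        exact Nat.mul_le_mul_right _ (by have := hc K (by omega); omega)
      have h3 : Q ^ (K+1) = Q * Q ^ K := by ring
      have h4 : (Q - 1) * Q ^ K + Q ^ K = Q * Q ^ K := by
        have : Q - 1 + 1 = Q := by omega
        calc (Q - 1) * Q ^ K + Q ^ K = (Q - 1 + 1) * Q ^ K := by ring
          _ = Q * Q ^ K := by rw [this]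
      omega

set_option maxHeartbeats 1000000 in
theorem stmt_18 (q : ℕ) (hq : 2 ≤ q) (p : Polynomial ℤ)
    (hdeg : 2 ≤ p.natDegree) (hlead : 0 < p.leadingCoeff) :
    ∃ C₀ : ℝ, 0 < C₀ ∧ ∀ N : ℕ, ∃ n : ℕ, N < n ∧ 0 < n ∧
      (digitSum q ((p.eval (n : ℤ)).toNat) : ℝ) / (digitSum q n : ℝ) ≤ C₀ / Real.log n := by
  classical
  obtain ⟨T, hA⟩ := exists_taylor_pos p hlead
  set P : ℤ[X] := taylor ((T:ℕ):ℤ) p with hPdef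
  set M' : ℤ := P.coeff 1 with hM'def
  have hM'1 : 1 ≤ M' := hA 1 (by omega)
  set M : ℕ := M'.toNat with hMdef
  have hMM : (M:ℤ) = M' := Int.toNat_of_nonneg (by omega)
  have hM1 : 1 ≤ M := by omega
  set g : ℤ[X] := P.comp (C M' * fg) with hgdef
  have hg : ∀ k, 0 ≤ g.coeff k := gcoeff_nonneg p T hdeg hA
  set D : ℕ := 4 * p.natDegree with hDdef
  have hgdeg : g.natDegree < D + 1 := by
    have h1 : g.natDegree ≤ P.natDegree * (C M' * fg).natDegree := natDegree_comp_le
    have h2 : (C M' * fg).natDegree ≤ 4 := le_trans (natDegree_C_mul_le _ _) natDegree_fg_le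
    have h3 : P.natDegree = p.natDegree := natDegree_taylor p _
    calc g.natDegree ≤ P.natDegree * (C M' * fg).natDegree := h1
      _ ≤ P.natDegree * 4 := Nat.mul_le_mul_left _ h2
      _ = 4 * p.natDegree := by rw [h3]; ring
      _ < D + 1 := by omega
  set G : ℕ → ℕ := fun k => (g.coeff k).toNat with hGdef
  set B : ℕ := ∑ k ∈ Finset.range (D+1), digitSum q (G k) with hBdef
  set E : ℕ := ∑ k ∈ Finset.range (D+1), G k with hEdef
  have hGE : ∀ k, k < D + 1 → G k ≤ E := by
    intro k hk
    exact Finset.single_le_sum (f := G) (fun i _ => Nat.zero_le _) (Finset.mem_range.mpr hk)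
  set j : ℕ := 3*M + T + 1 with hjdef
  have hlq : 0 < Real.log q := Real.log_pos (by exact_mod_cast (by omega : (1:ℕ) < q))
  refine ⟨12 * (B+1) * Real.log q, by positivity, ?_⟩
  intro N
  set m : ℕ := N + 2*j + E + 2 with hmdef
  set Q : ℕ := q ^ m with hQdef
  have hQ2 : 2 ≤ Q := by
    calc 2 = 2^1 := by norm_num
    _ ≤ 2^m := Nat.pow_le_pow_right (by omega) (by omega)
    _ ≤ q^m := Nat.pow_le_pow_left (by omega) m
  have hjq : 3*M + T < q ^ j := by
    calc 3*M + T < j := by omega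
    _ < 2^j := Nat.lt_two_pow_self (n := j)
    _ ≤ q^j := Nat.pow_le_pow_left (by omega) j
  have hqjQ : q ^ j ≤ Q := Nat.pow_le_pow_right (by omega) (by omega)
  have hMQ : M < Q := by omega
  have hEQ : E < Q := by
    calc E < m := by omega
    _ < 2^m := Nat.lt_two_pow_self (n := m)
    _ ≤ Q := Nat.pow_le_pow_left (by omega) m
  set c : ℕ → ℕ := fun k =>
    if k = 0 then M + T else if k = 1 then 2*M else if k = 2 then Q - M
    else if k = 3 then 3*M - 1 else if k = 4 then 2*M else 0 with hcdef
  set n : ℕ := ∑ k ∈ Finset.range 5, c k * Q ^ k with hndef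
  have hcQ : ∀ k, k < 5 → c k < Q := by
    intro k hk
    interval_cases k <;> simp [hcdef] <;> omega
  -- lower bound on n
  have hn_ge : 2*M*Q^4 ≤ n := by
    have := Finset.single_le_sum (f := fun k => c k * Q ^ k)
      (fun i _ => Nat.zero_le _) (Finset.mem_range.mpr (by omega : 4 < 5))
    simp only [show c 4 = 2*M by simp [hcdef]] at this; exact this
  have hQQ4 : Q ≤ Q^4 := Nat.le_self_pow (by omega) Q
  have hmQ : m < Q := lt_of_lt_of_le (Nat.lt_two_pow_self (n := m)) (Nat.pow_le_pow_left (by omega) m)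
  have hQ4M : Q^4 ≤ 2*M*Q^4 := by
    have h := Nat.mul_le_mul_right (Q^4) (show 1 ≤ 2*M by omega)
    simpa using h
  have hQn : Q ≤ n := le_trans hQQ4 (le_trans hQ4M hn_ge)
  have hNn : N < n := by omega
  have hn2 : 2 ≤ n := by omega
  refine ⟨n, hNn, by omega, ?_⟩
  -- digit sum of n
  have hds_n : digitSum q n = ∑ k ∈ Finset.range 5, digitSum q (c k) := by
    rw [hndef]
    exact DS.ds_blocks hq m 5 c hcQ
  have hSn_low : m - j ≤ digitSum q n := by
    have h1 : digitSum q (c 2) ≤ ∑ k ∈ Finset.range 5, digitSum q (c k) :=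
      Finset.single_le_sum (f := fun k => digitSum q (c k)) (fun i _ => Nat.zero_le _)
        (Finset.mem_range.mpr (by omega : 2 < 5))
    have h2 : (m - j) * (q - 1) ≤ digitSum q (c 2) := by
      have : c 2 = Q - M := by simp [hcdef]
      rw [this, hQdef]
      exact DS.ds_lower hq hM1 (by omega) (by omega)
    have h3 : (m - j) * 1 ≤ (m - j) * (q - 1) := Nat.mul_le_mul_left _ (by omega)
    omega
  -- value of p at n
  have hcast : (n : ℤ) = (C M' * fg).eval ((Q:ℕ):ℤ) + T := by
    have hev : (C M' * fg).eval ((Q:ℕ):ℤ) = M' * (2*(Q:ℤ)^4+3*(Q:ℤ)^3-(Q:ℤ)^2+2*(Q:ℤ)+1) := by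
      simp [fg]
    rw [hev, hndef]
    push_cast
    rw [Finset.sum_range_succ, Finset.sum_range_succ, Finset.sum_range_succ,
      Finset.sum_range_succ, Finset.sum_range_succ]
    norm_num [hcdef]
    have e1 : ((Q - M : ℕ) : ℤ) = (Q:ℤ) - (M:ℤ) := by
      have : M ≤ Q := by omega
      omega
    have e2 : ((3*M - 1 : ℕ) : ℤ) = 3*(M:ℤ) - 1 := by omega
    rw [e1, e2, ← hMM]
    push_cast
    ring
  have hpn : p.eval (n:ℤ) = g.eval ((Q:ℕ):ℤ) := by
    rw [hcast, hgdef, Polynomial.eval_comp, hPdef, Polynomial.taylor_eval]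
  set vN : ℕ := ∑ k ∈ Finset.range (D+1), G k * Q ^ k with hvNdef
  have hvcast : ((vN:ℕ):ℤ) = g.eval ((Q:ℕ):ℤ) := by
    rw [Polynomial.eval_eq_sum_range' hgdeg, hvNdef]
    push_cast
    apply Finset.sum_congr rfl
    intro k _
    rw [hGdef]
    rw [Int.toNat_of_nonneg (hg k)]
  have htoNat : (p.eval (n:ℤ)).toNat = vN := by
    rw [hpn, ← hvcast, Int.toNat_natCast]
  have hds_top : digitSum q ((p.eval (n:ℤ)).toNat) = B := by
    rw [htoNat, hvNdef, hBdef]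
    exact DS.ds_blocks hq m (D+1) G (fun k hk => by
      have := hGE k hk; omega)
  -- final real-number estimates
  rw [hds_top]
  have hSnR : (0:ℝ) < (digitSum q n : ℝ) := by
    have : 0 < digitSum q n := by omega
    exact_mod_cast this
  have hlogn : 0 < Real.log n := Real.log_pos (by exact_mod_cast hn2)
  rw [div_le_div_iff₀ hSnR hlogn]
  -- log n ≤ 6 m log q
  have hn_le : n ≤ Q ^ 6 := by
    have h1 : n < Q ^ 5 := by
      rw [hndef]
      exact sum_blocks_lt Q (by omega) 5 c hcQ
    have h2 : Q ^ 5 ≤ Q ^ 6 := Nat.pow_le_pow_right (by omega) (by omega)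
    omega
  have hlog_le : Real.log n ≤ (6*m : ℕ) * Real.log q := by
    have h1 : Real.log n ≤ Real.log ((Q:ℝ)^6) := by
      apply Real.log_le_log (by positivity)
      have : (n:ℝ) ≤ ((Q^6 : ℕ) : ℝ) := by exact_mod_cast hn_le
      calc (n:ℝ) ≤ ((Q^6 : ℕ):ℝ) := this
        _ = (Q:ℝ)^6 := by push_cast; ring
    have h2 : Real.log ((Q:ℝ)^6) = (6*m:ℕ) * Real.log q := by
      have : (Q:ℝ) = (q:ℝ)^m := by rw [hQdef]; push_cast; ring
      rw [this, ← pow_mul, Real.log_pow]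
      push_cast
      ring
    linarith
  -- main chain
  have hmj : m ≤ 2 * (m - j) := by omega
  have hSn_lowR : ((m - j : ℕ) : ℝ) ≤ (digitSum q n : ℝ) := by exact_mod_cast hSn_low
  have hBR : (0:ℝ) ≤ (B:ℝ) := by positivity
  calc (B:ℝ) * Real.log n ≤ (B:ℝ) * ((6*m:ℕ) * Real.log q) := by
        apply mul_le_mul_of_nonneg_left hlog_le hBR
    _ ≤ (12 * (B+1) * Real.log q) * ((m - j : ℕ):ℝ) := by
        have h6 : B * (6*m) ≤ 12 * (B+1) * (m-j) := by
          calc B * (6*m) = (6*m) * B := by ring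
            _ ≤ (6*(2*(m-j))) * B := Nat.mul_le_mul_right _ (by omega)
            _ = 12 * (m-j) * B := by ring
            _ ≤ 12 * ((m-j) * (B+1)) := by
                rw [mul_assoc]
                exact Nat.mul_le_mul_left _ (Nat.mul_le_mul_left _ (by omega))
            _ = 12 * (B+1) * (m-j) := by ring
        have key : (B:ℝ) * ((6*m : ℕ):ℝ) ≤ 12*((B:ℝ)+1) * ((m-j : ℕ):ℝ) := by
          exact_mod_cast h6
        calc (B:ℝ) * (((6*m:ℕ):ℝ) * Real.log q) = ((B:ℝ) * ((6*m:ℕ):ℝ)) * Real.log q := by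
              ring
          _ ≤ (12*((B:ℝ)+1) * ((m-j:ℕ):ℝ)) * Real.log q :=
              mul_le_mul_of_nonneg_right key hlq.le
          _ = (12 * ((B:ℝ)+1) * Real.log q) * ((m - j : ℕ):ℝ) := by ring
    _ ≤ (12 * (B+1) * Real.log q) * (digitSum q n : ℝ) := by
        apply mul_le_mul_of_nonneg_left hSn_lowR
        positivity
end
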